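/- arXiv:1806.03829 — 2 statements merged into one kernel-verified Lean document; each statement's English description precedes it below -/
import Mathlib

section
/- Let v ∈ ℝ^S be unimodal: there exists s* with v_1 ≤ … ≤ v_{s*} ≥ v_{s*+1} ≥ … ≥ v_S. Then for any partition of {1,…,S} into consecutive blocks, the sequence obtained by replacing each entry with the average of its block is still unimodal. -/
lemma avg_le_aux (v : ℕ → ℝ) (lo hi : ℕ) (h : lo < hi) (c : ℝ)
    (hc : ∀ j, lo ≤ j → j < hi → v j ≤ c) :
    (∑ j ∈ Finset.Ico lo hi, v j) / ((hi - lo : ℕ) : ℝ) ≤ c := by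
  have hcard : (0:ℝ) < ((hi - lo : ℕ) : ℝ) := by
    have : 0 < hi - lo := Nat.sub_pos_of_lt h
    exact_mod_cast this
  rw [div_le_iff₀ hcard]
  calc ∑ j ∈ Finset.Ico lo hi, v j ≤ ∑ _j ∈ Finset.Ico lo hi, c := by
        apply Finset.sum_le_sum
        intro j hj
        rw [Finset.mem_Ico] at hj
        exact hc j hj.1 hj.2
    _ = c * ((hi - lo : ℕ) : ℝ) := by
        rw [Finset.sum_const, Nat.card_Ico]
        simp [mul_comm]
    _ ≤ c * ((hi - lo : ℕ) : ℝ) := le_refl _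

lemma le_avg_aux (v : ℕ → ℝ) (lo hi : ℕ) (h : lo < hi) (c : ℝ)
    (hc : ∀ j, lo ≤ j → j < hi → c ≤ v j) :
    c ≤ (∑ j ∈ Finset.Ico lo hi, v j) / ((hi - lo : ℕ) : ℝ) := by
  have hcard : (0:ℝ) < ((hi - lo : ℕ) : ℝ) := by
    have : 0 < hi - lo := Nat.sub_pos_of_lt h
    exact_mod_cast this
  rw [le_div_iff₀ hcard]
  calc c * ((hi - lo : ℕ) : ℝ) = ∑ _j ∈ Finset.Ico lo hi, c := by
        rw [Finset.sum_const, Nat.card_Ico]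
        simp [mul_comm]
    _ ≤ ∑ j ∈ Finset.Ico lo hi, v j := by
        apply Finset.sum_le_sum
        intro j hj
        rw [Finset.mem_Ico] at hj
        exact hc j hj.1 hj.2

/-- A sequence on `{0,…,S-1}` is unimodal if it is nondecreasing up to some mode `s*`
and nonincreasing afterwards. -/
def IsUnimodal (S : ℕ) (v : ℕ → ℝ) : Prop :=
  ∃ s, s < S ∧ (∀ j j', j ≤ j' → j' ≤ s → v j ≤ v j') ∧
    (∀ j j', s ≤ j → j ≤ j' → j' < S → v j' ≤ v j)

/-- Block-averaging a unimodal sequence over a partition into consecutive blocks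
yields a unimodal sequence. -/
theorem stmt_2 (S b : ℕ) (hb : 0 < b) (v u : ℕ → ℝ) (i : ℕ → ℕ)
    (hi0 : i 0 = 0) (hib : i b = S)
    (hlt : ∀ m < b, i m < i (m + 1))
    (hv : IsUnimodal S v)
    (hu : ∀ m < b, ∀ j, i m ≤ j → j < i (m + 1) →
      u j = (∑ j' ∈ Finset.Ico (i m) (i (m + 1)), v j') / ((i (m + 1) - i m : ℕ) : ℝ)) :
    IsUnimodal S u := by
  obtain ⟨s, hsS, hinc, hdec⟩ := hv
  set a : ℕ → ℝ := fun m =>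
    (∑ j' ∈ Finset.Ico (i m) (i (m + 1)), v j') / ((i (m + 1) - i m : ℕ) : ℝ) with ha
  -- monotonicity of breakpoints
  have himono : ∀ m', m' ≤ b → ∀ m, m ≤ m' → i m ≤ i m' := by
    intro m' hm'
    induction m' with
    | zero => intro m hm; rw [Nat.le_zero.mp hm]
    | succ k ih =>
      intro m hm
      rcases eq_or_lt_of_le hm with h | h
      · rw [h]
      · have h1 : i m ≤ i k := ih (by omega) m (by omega)
        have h2 : i k < i (k+1) := hlt k (by omega)
        omega
  have hS : 0 < S := by
    have h1 : i 0 < i 1 := hlt 0 hb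
    have h2 : i 1 ≤ i b := himono b le_rfl 1 hb
    omega
  -- every index lies in a block
  have hblk : ∀ j, j < S → ∃ m, m < b ∧ i m ≤ j ∧ j < i (m + 1) := by
    intro j hj
    set m := Nat.findGreatest (fun m => i m ≤ j) b with hmdef
    have hmb : m ≤ b := Nat.findGreatest_le b
    have hm : i m ≤ j :=
      Nat.findGreatest_spec (P := fun m => i m ≤ j) (Nat.zero_le b) (by show i 0 ≤ j; rw [hi0]; exact Nat.zero_le j)
    have hmb' : m < b := by
      rcases Nat.lt_or_ge m b with h | h
      · exact h
      · exfalso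
        have : m = b := le_antisymm hmb h
        rw [this, hib] at hm
        omega
    have hnext : j < i (m+1) := by
      by_contra h
      push_neg at h
      exact Nat.findGreatest_is_greatest (Nat.lt_succ_self m) (by omega) h
    exact ⟨m, hmb', hm, hnext⟩
  -- averages lower bounded by min of endpoints; key "no strict interior min" lemma
  have hkey : ∀ p q r, p < q → q < r → r < b → min (a p) (a r) ≤ a q := by
    intro p q r hpq hqr hrb
    have hpb : p < b := by omega
    have hqb : q < b := by omega
    have hpp : i p < i (p+1) := hlt p hpb
    have hqq : i q < i (q+1) := hlt q hqb
    have hrr : i r < i (r+1) := hlt r hrb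
    have hp1q : i (p+1) ≤ i q := himono q (by omega) (p+1) (by omega)
    have hq1r : i (q+1) ≤ i r := himono r (by omega) (q+1) (by omega)
    have hr1S : i (r+1) ≤ S := by rw [← hib]; exact himono b le_rfl (r+1) (by omega)
    have hq1S : i (q+1) ≤ S := by omega
    by_cases hA : i (q+1) ≤ s + 1
    · -- block q entirely in nondecreasing region
      have h1 : a p ≤ v (i q) := by
        apply avg_le_aux v _ _ hpp
        intro j hj1 hj2
        exact hinc j (i q) (by omega) (by omega)
      have h2 : v (i q) ≤ a q := by
        apply le_avg_aux v _ _ hqq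
        intro j hj1 hj2
        exact hinc (i q) j hj1 (by omega)
      calc min (a p) (a r) ≤ a p := min_le_left _ _
        _ ≤ a q := le_trans h1 h2
    · by_cases hB : s ≤ i q
      · -- block q entirely in nonincreasing region
        have h1 : a r ≤ v (i (q+1) - 1) := by
          apply avg_le_aux v _ _ hrr
          intro j hj1 hj2
          exact hdec (i (q+1) - 1) j (by omega) (by omega) (by omega)
        have h2 : v (i (q+1) - 1) ≤ a q := by
          apply le_avg_aux v _ _ hqq
          intro j hj1 hj2
          exact hdec j (i (q+1) - 1) (by omega) (by omega) (by omega)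
        calc min (a p) (a r) ≤ a r := min_le_right _ _
          _ ≤ a q := le_trans h1 h2
      · -- mode s strictly inside block q
        push_neg at hA hB
        have h1 : a p ≤ v (i q) := by
          apply avg_le_aux v _ _ hpp
          intro j hj1 hj2
          exact hinc j (i q) (by omega) (by omega)
        have h2 : a r ≤ v (i (q+1) - 1) := by
          apply avg_le_aux v _ _ hrr
          intro j hj1 hj2
          exact hdec (i (q+1) - 1) j (by omega) (by omega) (by omega)
        have h3 : min (v (i q)) (v (i (q+1) - 1)) ≤ a q := by
          apply le_avg_aux v _ _ hqq
          intro j hj1 hj2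
          rcases le_or_gt j s with hjs | hjs
          · exact le_trans (min_le_left _ _) (hinc (i q) j hj1 hjs)
          · exact le_trans (min_le_right _ _)
              (hdec j (i (q+1) - 1) (by omega) (by omega) (by omega))
        exact le_trans (min_le_min h1 h2) h3
  -- pick a block maximizing the average
  obtain ⟨M, hMmem, hMmax⟩ :=
    Finset.exists_max_image (Finset.range b) a ⟨0, Finset.mem_range.mpr hb⟩
  have hMb : M < b := Finset.mem_range.mp hMmem
  have hup : ∀ m m', m ≤ m' → m' ≤ M → a m ≤ a m' := by
    intro m m' hmm' hm'M
    rcases Nat.lt_or_ge m m' with h | h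
    · rcases Nat.lt_or_ge m' M with h2 | h2
      · have := hkey m m' M h h2 hMb
        have hle : a m ≤ a M := hMmax m (Finset.mem_range.mpr (by omega))
        calc a m = min (a m) (a M) := (min_eq_left hle).symm
          _ ≤ a m' := this
      · have : m' = M := by omega
        rw [this]
        exact hMmax m (Finset.mem_range.mpr (by omega))
    · have : m = m' := by omega
      rw [this]
  have hdown : ∀ m m', M ≤ m → m ≤ m' → m' < b → a m' ≤ a m := by
    intro m m' hMm hmm' hm'b
    rcases Nat.lt_or_ge m m' with h | h
    · rcases Nat.lt_or_ge M m with h2 | h2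
      · have := hkey M m m' h2 h hm'b
        have hle : a m' ≤ a M := hMmax m' (Finset.mem_range.mpr hm'b)
        calc a m' = min (a M) (a m') := (min_eq_right hle).symm
          _ ≤ a m := this
      · have : m = M := by omega
        rw [this]
        exact hMmax m' (Finset.mem_range.mpr hm'b)
    · have : m = m' := by omega
      rw [this]
  -- facts about block M
  have hMM : i M < i (M+1) := hlt M hMb
  have hM1S : i (M+1) ≤ S := by rw [← hib]; exact himono b le_rfl (M+1) (by omega)
  refine ⟨i (M+1) - 1, by omega, ?_, ?_⟩
  · intro j j' hjj' hj's
    have hj'S : j' < S := by omega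
    have hjS : j < S := by omega
    obtain ⟨m, hmb, hm1, hm2⟩ := hblk j hjS
    obtain ⟨m', hm'b, hm'1, hm'2⟩ := hblk j' hj'S
    have hmm' : m ≤ m' := by
      by_contra h
      push_neg at h
      have : i (m'+1) ≤ i m := himono m (by omega) (m'+1) (by omega)
      omega
    have hm'M : m' ≤ M := by
      by_contra h
      push_neg at h
      have : i (M+1) ≤ i m' := himono m' (by omega) (M+1) (by omega)
      omega
    rw [hu m hmb j hm1 hm2, hu m' hm'b j' hm'1 hm'2]
    exact hup m m' hmm' hm'M
  · intro j j' hsj hjj' hj'S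
    have hjS : j < S := by omega
    obtain ⟨m, hmb, hm1, hm2⟩ := hblk j hjS
    obtain ⟨m', hm'b, hm'1, hm'2⟩ := hblk j' hj'S
    have hmm' : m ≤ m' := by
      by_contra h
      push_neg at h
      have : i (m'+1) ≤ i m := himono m (by omega) (m'+1) (by omega)
      omega
    have hMm : M ≤ m := by
      by_contra h
      push_neg at h
      have : i (m+1) ≤ i M := himono M (by omega) (m+1) (by omega)
      omega
    rw [hu m hmb j hm1 hm2, hu m' hm'b j' hm'1 hm'2]
    exact hdown m m' hMm hmm' hm'b
end

section
/- Let v ∈ ℝ^S be inverse unimodal: there exists s* with v_1 ≥ … ≥ v_{s*} ≤ v_{s*+1} ≤ … ≤ v_S. Then consecutive-block averaging (for any partition into consecutive blocks) preserves the inverse unimodal shape. -/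
/-- A sequence on `{0,…,S-1}` is inverse unimodal: nonincreasing up to some `s*`,
nondecreasing afterwards. -/
def IsInvUnimodal (S : ℕ) (v : ℕ → ℝ) : Prop :=
  ∃ s, s < S ∧ (∀ j j', j ≤ j' → j' ≤ s → v j' ≤ v j) ∧
    (∀ j j', s ≤ j → j ≤ j' → j' < S → v j ≤ v j')

/-- A chain lemma: adjacent nonincreasing steps up to `p` give antitonicity up to `p`. -/
lemma stmt3_down_chain (A : ℕ → ℝ) (p : ℕ) (h : ∀ m, m + 1 ≤ p → A (m + 1) ≤ A m) :
    ∀ m m', m ≤ m' → m' ≤ p → A m' ≤ A m := by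
  intro m m' hmm hp
  induction m' with
  | zero => rw [Nat.le_zero.mp hmm]
  | succ k ih =>
    rcases Nat.eq_or_lt_of_le hmm with h1 | h1
    · rw [h1]
    · exact le_trans (h k hp) (ih (Nat.lt_succ_iff.mp h1) (le_trans (Nat.le_succ k) hp))

/-- A chain lemma: adjacent nondecreasing steps from `p` up to below `b` give monotonicity. -/
lemma stmt3_up_chain (A : ℕ → ℝ) (p b : ℕ) (h : ∀ m, p ≤ m → m + 1 < b → A m ≤ A (m + 1)) :
    ∀ m m', p ≤ m → m ≤ m' → m' < b → A m ≤ A m' := by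
  intro m m' hpm hmm hb
  induction m' with
  | zero => rw [Nat.le_zero.mp hmm]
  | succ k ih =>
    rcases Nat.eq_or_lt_of_le hmm with h1 | h1
    · rw [h1]
    · exact le_trans (ih (Nat.lt_succ_iff.mp h1) (lt_trans (Nat.lt_succ_self k) hb))
        (h k (le_trans hpm (Nat.lt_succ_iff.mp h1)) hb)

/-- Block-averaging an inverse unimodal sequence over a partition into consecutive blocks
yields an inverse unimodal sequence. -/
theorem stmt_3 (S b : ℕ) (hb : 0 < b) (v u : ℕ → ℝ) (i : ℕ → ℕ)
    (hi0 : i 0 = 0) (hib : i b = S)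
    (hlt : ∀ m < b, i m < i (m + 1))
    (hv : IsInvUnimodal S v)
    (hu : ∀ m < b, ∀ j, i m ≤ j → j < i (m + 1) →
      u j = (∑ j' ∈ Finset.Ico (i m) (i (m + 1)), v j') / ((i (m + 1) - i m : ℕ) : ℝ)) :
    IsInvUnimodal S u := by
  obtain ⟨s, hsS, hdec, hinc⟩ := hv
  -- monotonicity of breakpoints
  have himono : ∀ m m' : ℕ, m ≤ m' → m' ≤ b → i m ≤ i m' := by
    intro m m' hmm hm'b
    induction m' with
    | zero => rw [Nat.le_zero.mp hmm]
    | succ k ih =>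
      rcases Nat.eq_or_lt_of_le hmm with h1 | h1
      · rw [h1]
      · exact le_trans (ih (Nat.lt_succ_iff.mp h1) (le_trans (Nat.le_succ k) hm'b))
          (le_of_lt (hlt k (Nat.lt_of_succ_le hm'b)))
  have histrict : ∀ m m' : ℕ, m < m' → m' ≤ b → i m < i m' := by
    intro m m' hmm hm'b
    have h1 : i m < i (m + 1) := hlt m (lt_of_lt_of_le hmm hm'b)
    exact lt_of_lt_of_le h1 (himono (m + 1) m' hmm hm'b)
  -- the block average
  set A : ℕ → ℝ := fun m => (∑ j' ∈ Finset.Ico (i m) (i (m + 1)), v j') /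
      ((i (m + 1) - i m : ℕ) : ℝ) with hA
  have hcardpos : ∀ m < b, (0 : ℝ) < ((i (m + 1) - i m : ℕ) : ℝ) := by
    intro m hm
    exact_mod_cast Nat.sub_pos_of_lt (hlt m hm)
  have avg_le : ∀ m < b, ∀ c : ℝ, (∀ j, i m ≤ j → j < i (m + 1) → v j ≤ c) → A m ≤ c := by
    intro m hm c hc
    rw [hA, div_le_iff₀ (hcardpos m hm)]
    calc ∑ j' ∈ Finset.Ico (i m) (i (m + 1)), v j'
        ≤ (Finset.Ico (i m) (i (m + 1))).card • c := by
          apply Finset.sum_le_card_nsmul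
          intro x hx
          rw [Finset.mem_Ico] at hx
          exact hc x hx.1 hx.2
      _ = c * ((i (m + 1) - i m : ℕ) : ℝ) := by
          rw [Nat.card_Ico, nsmul_eq_mul, mul_comm]
  have le_avg : ∀ m < b, ∀ c : ℝ, (∀ j, i m ≤ j → j < i (m + 1) → c ≤ v j) → c ≤ A m := by
    intro m hm c hc
    rw [hA, le_div_iff₀ (hcardpos m hm)]
    calc c * ((i (m + 1) - i m : ℕ) : ℝ)
        = (Finset.Ico (i m) (i (m + 1))).card • c := by
          rw [Nat.card_Ico, nsmul_eq_mul, mul_comm]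
      _ ≤ ∑ j' ∈ Finset.Ico (i m) (i (m + 1)), v j' := by
          apply Finset.card_nsmul_le_sum
          intro x hx
          rw [Finset.mem_Ico] at hx
          exact hc x hx.1 hx.2
  -- the block containing a given index
  set blk : ℕ → ℕ := fun j => Nat.findGreatest (fun m => i m ≤ j) b with hblk
  have hblk_le : ∀ j, i (blk j) ≤ j := by
    intro j
    exact Nat.findGreatest_spec (P := fun m => i m ≤ j) (Nat.zero_le b)
      (show i 0 ≤ j by omega)
  have hblk_lt : ∀ j, j < S → blk j < b := by
    intro j hj
    have h1 : blk j ≤ b := Nat.findGreatest_le b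
    rcases Nat.eq_or_lt_of_le h1 with h2 | h2
    · exfalso
      have := hblk_le j
      rw [h2, hib] at this
      omega
    · exact h2
  have hblk_succ : ∀ j, j < S → j < i (blk j + 1) := by
    intro j hj
    by_contra hcon
    push_neg at hcon
    exact Nat.findGreatest_is_greatest (P := fun m => i m ≤ j) (Nat.lt_succ_self _)
      (hblk_lt j hj) hcon
  have hblk_mono : ∀ j j', j ≤ j' → j' < S → blk j ≤ blk j' := by
    intro j j' hjj hj'
    by_contra hcon
    push_neg at hcon
    have h1 : i (blk j' + 1) ≤ i (blk j) := himono _ _ hcon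
      (le_trans (Nat.le_of_lt (hblk_lt j (lt_of_le_of_lt hjj hj'))) (le_refl b))
    have h2 := hblk_le j
    have h3 := hblk_succ j' hj'
    omega
  have hu' : ∀ j, j < S → u j = A (blk j) := by
    intro j hj
    exact hu (blk j) (hblk_lt j hj) j (hblk_le j) (hblk_succ j hj)
  -- the pivot block
  set M : ℕ := blk s with hM
  have hMb : M < b := hblk_lt s hsS
  have hM1 : i M ≤ s := hblk_le s
  have hM2 : s < i (M + 1) := hblk_succ s hsS
  -- step lemmas
  have L1 : ∀ m, m + 2 ≤ M → A (m + 1) ≤ A m := by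
    intro m hm
    have hm2b : m + 2 ≤ b := le_trans hm (Nat.le_of_lt hMb)
    have him2 : i (m + 2) ≤ s := le_trans (himono (m + 2) M hm (Nat.le_of_lt hMb)) hM1
    have him1 : i (m + 1) ≤ s := le_trans (le_of_lt (hlt (m + 1) (by omega))) him2
    have e2 : i (m + 1 + 1) = i (m + 2) := congrArg i (by omega)
    have h1 : A (m + 1) ≤ v (i (m + 1)) := by
      apply avg_le (m + 1) (by omega)
      intro j hj1 hj2
      exact hdec (i (m + 1)) j hj1 (by omega)
    have h2 : v (i (m + 1)) ≤ A m := by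
      apply le_avg m (by omega)
      intro j hj1 hj2
      exact hdec j (i (m + 1)) (le_of_lt hj2) him1
    exact le_trans h1 h2
  have L2 : ∀ m, M + 1 ≤ m → m + 1 < b → A m ≤ A (m + 1) := by
    intro m hm hmb
    have hsm : s < i m := lt_of_lt_of_le hM2 (himono (M + 1) m hm (by omega))
    have him1S : i (m + 1) < S := by rw [← hib]; exact histrict (m + 1) b hmb (le_refl b)
    have him2S : i (m + 2) ≤ S := by rw [← hib]; exact himono (m + 2) b hmb (le_refl b)
    have h1 : A m ≤ v (i (m + 1)) := by
      apply avg_le m (by omega)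
      intro j hj1 hj2
      exact hinc j (i (m + 1)) (by omega) (le_of_lt hj2) him1S
    have e2 : i (m + 1 + 1) = i (m + 2) := congrArg i (by omega)
    have e1 : i m < i (m + 1) := hlt m (by omega)
    have h2 : v (i (m + 1)) ≤ A (m + 1) := by
      apply le_avg (m + 1) hmb
      intro j hj1 hj2
      exact hinc (i (m + 1)) j (by omega) hj1 (by omega)
    exact le_trans h1 h2
  -- the pivot block's average is at most the max of its neighbors'
  have L3 : ∀ k, k + 1 = M → M + 1 < b → A M ≤ max (A k) (A (M + 1)) := by
    intro k hk hMb1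
    apply avg_le M hMb
    intro j hj1 hj2
    by_cases hjs : j ≤ s
    · have h1 : v j ≤ v (i M) := hdec (i M) j hj1 hjs
      have h2 : v (i M) ≤ A k := by
        apply le_avg k (by omega)
        intro j'' hj''1 hj''2
        rw [hk] at hj''2
        exact hdec j'' (i M) (le_of_lt hj''2) hM1
      exact le_trans (le_trans h1 h2) (le_max_left _ _)
    · push_neg at hjs
      have him1S : i (M + 1) < S := by rw [← hib]; exact histrict (M + 1) b hMb1 (le_refl b)
      have him2S : i (M + 2) ≤ S := by rw [← hib]; exact himono (M + 2) b hMb1 (le_refl b)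
      have h1 : v j ≤ v (i (M + 1)) := hinc j (i (M + 1)) (le_of_lt hjs) (le_of_lt hj2) him1S
      have e2 : i (M + 1 + 1) = i (M + 2) := congrArg i (by omega)
      have h2 : v (i (M + 1)) ≤ A (M + 1) := by
        apply le_avg (M + 1) hMb1
        intro j'' hj''1 hj''2
        exact hinc (i (M + 1)) j'' (le_of_lt hM2) hj''1 (by omega)
      exact le_trans (le_trans h1 h2) (le_max_right _ _)
  -- choose the pivot block p
  obtain ⟨p, hpb, hdn, hup⟩ :
      ∃ p, p < b ∧ (∀ m, m + 1 ≤ p → A (m + 1) ≤ A m) ∧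
        (∀ m, p ≤ m → m + 1 < b → A m ≤ A (m + 1)) := by
    by_cases hR : M + 1 < b ∧ A (M + 1) < A M
    · refine ⟨M + 1, hR.1, ?_, ?_⟩
      · intro m hm
        rcases Nat.lt_or_ge (m + 1) M with h1 | h1
        · rcases Nat.lt_or_ge (m + 2) M with h2 | h2
          · exact L1 m (le_of_lt h2)
          · exact L1 m (by omega)
        · rcases Nat.eq_or_lt_of_le h1 with h2 | h2
          · -- m + 1 = M
            have hk : m + 1 = M := by omega
            have h3 := L3 m hk hR.1
            rw [hk]
            rcases le_max_iff.mp h3 with h4 | h4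
            · exact h4
            · exact absurd (lt_of_le_of_lt h4 hR.2) (lt_irrefl _)
          · -- M < m + 1 and m + 1 ≤ M + 1, so m = M
            have hmM : m = M := by omega
            rw [hmM]
            exact le_of_lt hR.2
      · intro m hm hmb
        exact L2 m hm hmb
    · push_neg at hR
      by_cases hL : 0 < M ∧ A (M - 1) < A M
      · refine ⟨M - 1, by omega, ?_, ?_⟩
        · intro m hm
          exact L1 m (by omega)
        · intro m hm hmb
          rcases Nat.lt_or_ge m M with h1 | h1
          · have hmM : m = M - 1 := by omega
            have : m + 1 = M := by omega
            rw [hmM] at *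
            rw [this]
            exact le_of_lt hL.2
          · rcases Nat.eq_or_lt_of_le h1 with h2 | h2
            · rw [← h2]
              rw [← h2] at hmb
              exact hR hmb
            · exact L2 m h2 hmb
      · refine ⟨M, hMb, ?_, ?_⟩
        · intro m hm
          rcases Nat.eq_or_lt_of_le hm with h1 | h1
          · -- m + 1 = M
            have hM0 : 0 < M := by omega
            by_contra hcon
            push_neg at hcon
            apply hL
            refine ⟨hM0, ?_⟩
            have : m = M - 1 := by omega
            rw [← this, h1] at *
            exact hcon
          · exact L1 m h1
        · intro m hm hmb
          rcases Nat.eq_or_lt_of_le hm with h1 | h1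
          · rw [← h1]
            rw [← h1] at hmb
            exact hR hmb
          · exact L2 m h1 hmb
  -- conclude
  refine ⟨i p, ?_, ?_, ?_⟩
  · rw [← hib]; exact histrict p b hpb (le_refl b)
  · intro j j' hjj hj'
    have hj'S : j' < S := by
      have : i p < S := by rw [← hib]; exact histrict p b hpb (le_refl b)
      omega
    have hjS : j < S := lt_of_le_of_lt hjj hj'S
    rw [hu' j hjS, hu' j' hj'S]
    have hbj' : blk j' ≤ p := by
      by_contra hcon
      push_neg at hcon
      have h1 : i (p + 1) ≤ i (blk j') := himono _ _ hcon (Nat.le_of_lt (hblk_lt j' hj'S))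
      have h2 := hblk_le j'
      have h3 : i p < i (p + 1) := hlt p hpb
      omega
    exact stmt3_down_chain A p hdn (blk j) (blk j') (hblk_mono j j' hjj hj'S) hbj'
  · intro j j' hj hjj hj'S
    have hjS : j < S := lt_of_le_of_lt hjj hj'S
    rw [hu' j hjS, hu' j' hj'S]
    have hbj : p ≤ blk j := by
      by_contra hcon
      push_neg at hcon
      have h1 : i (blk j + 1) ≤ i p := himono _ _ hcon (Nat.le_of_lt hpb)
      have h2 := hblk_succ j hjS
      omega
    exact stmt3_up_chain A p b hup (blk j) (blk j') hbj (hblk_mono j j' hjj hj'S)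
      (hblk_lt j' hj'S)
end
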